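/- arXiv:1007.4896 — 2 statements merged into one kernel-verified Lean document; each statement's English description precedes it below -/
import Mathlib

section
/- The Courant bracket ⟦·,·⟧ on the omni-Lie 2-algebra gl(𝕍) ⊕ 𝕍 is a skew-symmetric bilinear functor: for all morphisms e₁ = (A,φ,u,m), e₂ = (B,ψ,v,n) ∈ E, one has s⟦e₁,e₂⟧ = ⟦s(e₁), s(e₂)⟧ = ([A,B], ½(A₀v − B₀u)) and t⟦e₁,e₂⟧ = ⟦t(e₁), t(e₂)⟧, where t(A,φ,u,m) = (A+δφ, u+dm); it sends pairs of identity morphisms to identity morphisms; and for composable pairs (t(e₁) = s(e₁′), t(e₂) = s(e₂′)) one has ⟦e₁·e₁′, e₂·e₂′⟧ = ⟦e₁,e₂⟧·⟦e₁′,e₂′⟧, where e·e′ = (A, φ+φ′, u, m+m′) is vertical composition in gl(𝕍) ⊕ 𝕍. -/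
open LinearMap

noncomputable section

namespace Omni

variable {V₀ V₁ : Type*}
  [AddCommGroup V₀] [Module ℝ V₀] [AddCommGroup V₁] [Module ℝ V₁]

variable (d : V₁ →ₗ[ℝ] V₀)

/-- `End⁰`: pairs `(A₀, A₁)` of endomorphisms with `A₀ ∘ d = d ∘ A₁`. -/
def End0 : Submodule ℝ ((V₀ →ₗ[ℝ] V₀) × (V₁ →ₗ[ℝ] V₁)) where
  carrier := {A | A.1 ∘ₗ d = d ∘ₗ A.2}
  add_mem' := by
    intro a b ha hb
    simp only [Set.mem_setOf_eq] at *
    simp [add_comp, comp_add, ha, hb]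
  zero_mem' := by
    simp only [Set.mem_setOf_eq]
    simp
  smul_mem' := by
    intro c a ha
    simp only [Set.mem_setOf_eq] at *
    simp [smul_comp, comp_smul, ha]

lemma mem_End0 {A : (V₀ →ₗ[ℝ] V₀) × (V₁ →ₗ[ℝ] V₁)} :
    A ∈ End0 d ↔ A.1 ∘ₗ d = d ∘ₗ A.2 := Iff.rfl

/-- Morphism space of `gl(𝕍)`:  `End⁰ ⊕ End¹`. -/
abbrev Gl := ↥(End0 d) × (V₀ →ₗ[ℝ] V₁)

/-- Morphism space of the omni-Lie 2-algebra `gl(𝕍) ⊕ 𝕍`. -/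
abbrev E := Gl d × (V₀ × V₁)

/-- `δ : End¹ → End⁰`, `δφ = (d∘φ, φ∘d)`. -/
def δm (φ : V₀ →ₗ[ℝ] V₁) : End0 d :=
  ⟨(d ∘ₗ φ, φ ∘ₗ d), by
    rw [mem_End0]
    exact (comp_assoc _ _ _).symm⟩

/-- commutator bracket on `End⁰`. -/
def bkt0 (A B : End0 d) : End0 d :=
  ⟨(A.1.1 ∘ₗ B.1.1 - B.1.1 ∘ₗ A.1.1, A.1.2 ∘ₗ B.1.2 - B.1.2 ∘ₗ A.1.2), by
    have hA : A.1.1 ∘ₗ d = d ∘ₗ A.1.2 := A.2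
    have hB : B.1.1 ∘ₗ d = d ∘ₗ B.1.2 := B.2
    rw [mem_End0]
    have ha : ∀ x, A.1.1 (d x) = d (A.1.2 x) := fun x => LinearMap.congr_fun hA x
    have hb : ∀ x, B.1.1 (d x) = d (B.1.2 x) := fun x => LinearMap.congr_fun hB x
    ext m
    simp [ha, hb]⟩

/-- `[A,φ] = A₁ ∘ φ - φ ∘ A₀` for `A ∈ End⁰`, `φ ∈ End¹`. -/
def bktAφ (A : End0 d) (φ : V₀ →ₗ[ℝ] V₁) : V₀ →ₗ[ℝ] V₁ :=
  A.1.2 ∘ₗ φ - φ ∘ₗ A.1.1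

/-- `[φ,ψ]_δ = φ∘d∘ψ - ψ∘d∘φ`. -/
def bktδ (φ ψ : V₀ →ₗ[ℝ] V₁) : V₀ →ₗ[ℝ] V₁ :=
  φ ∘ₗ d ∘ₗ ψ - ψ ∘ₗ d ∘ₗ φ

/-- bracket on the morphism space `End⁰ ⊕ End¹` of `gl(𝕍)`. -/
def bkt (X Y : Gl d) : Gl d :=
  (bkt0 d X.1 Y.1, bktAφ d X.1 Y.2 - bktAφ d Y.1 X.2 + bktδ d X.2 Y.2)

/-- action of `gl(𝕍)` on `𝕍`:  `(A,φ)·(u,m) = (A₀u, A₁m + φ(u+dm))`. -/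
def act (X : Gl d) (ξ : V₀ × V₁) : V₀ × V₁ :=
  (X.1.1.1 ξ.1, X.1.1.2 ξ.2 + X.2 (ξ.1 + d ξ.2))

/-- the `𝕍`-valued pairing on `E`. -/
def pairE (e₁ e₂ : E d) : V₀ × V₁ :=
  (2⁻¹ : ℝ) • (act d e₁.1 e₂.2 + act d e₂.1 e₁.2)

/-- pairing at the level of objects. -/
def pairObj (x y : (End0 d) × V₀) : V₀ :=
  (2⁻¹ : ℝ) • (x.1.1.1 y.2 + y.1.1.1 x.2)

/-- the Courant bracket on `E`. -/
def courant (e₁ e₂ : E d) : E d :=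
  (bkt d e₁.1 e₂.1, (2⁻¹ : ℝ) • (act d e₁.1 e₂.2 - act d e₂.1 e₁.2))

/-- Courant bracket at the level of objects. -/
def courantObj (x y : (End0 d) × V₀) : (End0 d) × V₀ :=
  (bkt0 d x.1 y.1, (2⁻¹ : ℝ) • (x.1.1.1 y.2 - y.1.1.1 x.2))

/-- the Dorfman bracket on `E`. -/
def dorfman (e₁ e₂ : E d) : E d :=
  (bkt d e₁.1 e₂.1, act d e₁.1 e₂.2)

/-- source of a morphism of `gl(𝕍) ⊕ 𝕍`. -/
def sE (e : E d) : (End0 d) × V₀ := (e.1.1, e.2.1)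

/-- target of a morphism of `gl(𝕍) ⊕ 𝕍`. -/
def tE (e : E d) : (End0 d) × V₀ := (e.1.1 + δm d e.1.2, e.2.1 + d e.2.2)

/-- vertical composition of morphisms of `gl(𝕍) ⊕ 𝕍`. -/
def compE (e e' : E d) : E d := ((e.1.1, e.1.2 + e'.1.2), (e.2.1, e.2.2 + e'.2.2))

/-- vertical composition of morphisms of `𝕍`. -/
def compV (x y : V₀ × V₁) : V₀ × V₁ := (x.1, x.2 + y.2)

/-- orthogonal complement w.r.t. the `𝕍`-valued pairing. -/
def perp (L : Set (E d)) : Set (E d) := {e | ∀ l ∈ L, pairE d e l = 0}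

/-- bilinear functor data `(F₀, F_a, F_b)` for `𝕍`. -/
structure BilinData where
  F0 : V₀ →ₗ[ℝ] V₀ →ₗ[ℝ] V₀
  Fa : V₀ →ₗ[ℝ] V₁ →ₗ[ℝ] V₁
  Fb : V₁ →ₗ[ℝ] V₀ →ₗ[ℝ] V₁
  ha : ∀ u n, d (Fa u n) = F0 u (d n)
  hb : ∀ m v, d (Fb m v) = F0 (d m) v
  hc : ∀ m n, Fa (d m) n = Fb m (d n)

/-- `ad_F (u,m) = ((F₀(u,·), F_a(u,·)), F_b(m,·))`. -/
def adF (F : BilinData d) (ξ : V₀ × V₁) : Gl d :=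
  (⟨(F.F0 ξ.1, F.Fa ξ.1), by
      rw [mem_End0]
      ext n
      exact (F.ha ξ.1 n).symm⟩, F.Fb ξ.2)

/-- the graph `G_F = {(ad_F ξ, ξ)}`. -/
def graphF (F : BilinData d) : Set (E d) := {e | ∃ ξ : V₀ × V₁, e = (adF d F ξ, ξ)}

/-- an isomorphism `μ = (μ₀, μ₁, μ₂)` from the Lie 2-algebra `gl(𝕍)` to itself. -/
structure GlIso where
  μ0 : (End0 d) ≃ₗ[ℝ] (End0 d)
  μ1 : (Gl d) ≃ₗ[ℝ] (Gl d)
  hs : ∀ X : Gl d, (μ1 X).1 = μ0 X.1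
  ht : ∀ X : Gl d, (μ1 X).1 + δm d (μ1 X).2 = μ0 (X.1 + δm d X.2)
  hid : ∀ A : End0 d, μ1 (A, 0) = (μ0 A, 0)
  hcomp : ∀ (A : End0 d) (φ φ' : V₀ →ₗ[ℝ] V₁),
    μ1 (A, φ + φ') = ((μ1 (A, φ)).1, (μ1 (A, φ)).2 + (μ1 (A + δm d φ, φ')).2)
  μ2 : (End0 d) →ₗ[ℝ] (End0 d) →ₗ[ℝ] Gl d
  hskew : ∀ A B, μ2 A B = - μ2 B A
  hs2 : ∀ A B, (μ2 A B).1 = μ0 (bkt0 d A B)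
  ht2 : ∀ A B, (μ2 A B).1 + δm d (μ2 A B).2 = bkt0 d (μ0 A) (μ0 B)
  hnat : ∀ (A B : End0 d) (φ ψ : V₀ →ₗ[ℝ] V₁),
    (μ2 A B).2 + (bkt d (μ1 (A, φ)) (μ1 (B, ψ))).2
      = (μ1 (bkt d (A, φ) (B, ψ))).2 + (μ2 (A + δm d φ) (B + δm d ψ)).2
  hcoh : ∀ A B C : End0 d,
    (μ2 (bkt0 d A B) C).2 + (bkt d (μ2 A B) ((μ0 C, 0) : Gl d)).2
      = (μ2 A (bkt0 d B C)).2 + (μ2 B (bkt0 d C A)).2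
        + (bkt d ((μ0 A, 0) : Gl d) (μ2 B C)).2
        + (bkt d ((μ0 B, 0) : Gl d) (μ2 C A)).2

/-- the `μ`-twisted pairing on `E`. -/
def pairμ (μ : GlIso d) (e₁ e₂ : E d) : V₀ × V₁ :=
  (2⁻¹ : ℝ) • (act d (μ.μ1 e₁.1) e₂.2 + act d (μ.μ1 e₂.1) e₁.2)

/-- the `μ`-twisted Courant bracket on `E`. -/
def courantμ (μ : GlIso d) (e₁ e₂ : E d) : E d :=
  (bkt d e₁.1 e₂.1, (2⁻¹ : ℝ) • (act d (μ.μ1 e₁.1) e₂.2 - act d (μ.μ1 e₂.1) e₁.2))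

/-- orthogonal complement w.r.t. the `μ`-twisted pairing. -/
def perpμ (μ : GlIso d) (L : Set (E d)) : Set (E d) := {e | ∀ l ∈ L, pairμ d μ e l = 0}

/-- the `μ`-twisted Dorfman bracket at the level of objects. -/
def dorfObjμ (μ : GlIso d) (x y : (End0 d) × V₀) : (End0 d) × V₀ :=
  (bkt0 d x.1 y.1, (μ.μ0 x.1).1.1 y.2)

end Omni

end

/-!
All five properties are componentwise identities of linear maps. The only relation they need is
`A₀ ∘ d = d ∘ A₁` for `A ∈ End⁰`: it makes the target maps `(A, φ) ↦ A + δφ` and `(u, m) ↦ u + dm`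
intertwine the bracket of `gl(𝕍)` and its action on `𝕍`. Functoriality for vertical composition
holds because the bracket and the action split over `φ + φ'` into a part at `(A, φ)` and a part
at the composable morphism `(A + δφ, φ')`.
-/

namespace Omni

variable {V₀ V₁ : Type*} [AddCommGroup V₀] [Module ℝ V₀] [AddCommGroup V₁] [Module ℝ V₁]
  {d : V₁ →ₗ[ℝ] V₀}

theorem End0.apply_d (A : End0 d) (x : V₁) : A.1.1 (d x) = d (A.1.2 x) :=
  LinearMap.congr_fun A.2 x

theorem bkt0_swap (A B : End0 d) : bkt0 d B A = -bkt0 d A B := by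
  ext : 2 <;> simp [bkt0]

theorem bkt_swap (X Y : Gl d) : bkt d Y X = -bkt d X Y := by
  refine Prod.ext (bkt0_swap _ _) ?_
  ext
  simp only [bkt, bktAφ, bktδ, Prod.snd_neg, LinearMap.neg_apply, LinearMap.add_apply,
    LinearMap.sub_apply]
  abel

theorem courant_swap (e₁ e₂ : E d) : courant d e₂ e₁ = -courant d e₁ e₂ := by
  refine Prod.ext (bkt_swap _ _) ?_
  simp only [courant, Prod.snd_neg, ← smul_neg, neg_sub]

theorem bkt_target (X Y : Gl d) :
    (bkt d X Y).1 + δm d (bkt d X Y).2 = bkt0 d (X.1 + δm d X.2) (Y.1 + δm d Y.2) := by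
  ext x : 3 <;>
  simp only [bkt, bkt0, bktAφ, bktδ, δm, AddMemClass.coe_add, Prod.fst_add, Prod.snd_add,
    LinearMap.add_apply, LinearMap.sub_apply, LinearMap.comp_apply, map_add, map_sub,
    End0.apply_d] <;>
  abel

theorem act_target (X : Gl d) (ξ : V₀ × V₁) :
    (act d X ξ).1 + d (act d X ξ).2 = (X.1 + δm d X.2).1.1 (ξ.1 + d ξ.2) := by
  simp only [act, δm, AddMemClass.coe_add, Prod.fst_add, LinearMap.add_apply,
    LinearMap.comp_apply, map_add, End0.apply_d]
  abel

theorem tE_courant (e₁ e₂ : E d) :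
    tE d (courant d e₁ e₂) = courantObj d (tE d e₁) (tE d e₂) := by
  refine Prod.ext (bkt_target _ _) ?_
  simp only [tE, courant, courantObj, Prod.smul_fst, Prod.smul_snd, Prod.fst_sub,
    Prod.snd_sub, map_smul, map_sub, ← smul_add, ← act_target]
  congr 1
  abel

theorem bkt_id (A B : End0 d) : bkt d (A, 0) (B, 0) = (bkt0 d A B, 0) := by
  simp [bkt, bktAφ, bktδ]

theorem act_id (A : End0 d) (u : V₀) : act d (A, 0) (u, 0) = (A.1.1 u, 0) := by
  simp [act]

theorem courant_id (A B : End0 d) (u v : V₀) :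
    courant d ((A, 0), (u, 0)) ((B, 0), (v, 0))
      = (((courantObj d (A, u) (B, v)).1, 0), ((courantObj d (A, u) (B, v)).2, 0)) := by
  simp [courant, courantObj, bkt_id, act_id]

theorem bkt_comp_snd (A B : End0 d) (φ φ' ψ ψ' : V₀ →ₗ[ℝ] V₁) :
    (bkt d (A, φ + φ') (B, ψ + ψ')).2
      = (bkt d (A, φ) (B, ψ)).2 + (bkt d (A + δm d φ, φ') (B + δm d ψ, ψ')).2 := by
  ext x
  simp only [bkt, bktAφ, bktδ, δm, AddMemClass.coe_add, Prod.fst_add, Prod.snd_add,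
    LinearMap.add_apply, LinearMap.sub_apply, LinearMap.comp_apply, map_add]
  abel

theorem act_comp (A : End0 d) (φ φ' : V₀ →ₗ[ℝ] V₁) (u : V₀) (m m' : V₁) :
    act d (A, φ + φ') (u, m + m')
      = compV (act d (A, φ) (u, m)) (act d (A + δm d φ, φ') (u + d m, m')) := by
  simp only [act, compV, δm, AddMemClass.coe_add, Prod.fst_add, Prod.snd_add,
    LinearMap.add_apply, LinearMap.comp_apply, map_add, Prod.mk.injEq, true_and]
  abel

theorem compV_smul_sub (c : ℝ) (x y x' y' : V₀ × V₁) :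
    compV (c • (x - y)) (c • (x' - y')) = c • (compV x x' - compV y y') := by
  simp only [compV, Prod.smul_mk, Prod.mk_sub_mk, Prod.smul_fst, Prod.smul_snd, Prod.fst_sub,
    Prod.snd_sub, ← smul_add, sub_add_sub_comm]

theorem courant_compE (e₁ e₁' e₂ e₂' : E d) (h₁ : sE d e₁' = tE d e₁) (h₂ : sE d e₂' = tE d e₂) :
    courant d (compE d e₁ e₁') (compE d e₂ e₂')
      = compE d (courant d e₁ e₂) (courant d e₁' e₂') := by
  obtain ⟨⟨A, φ⟩, u, m⟩ := e₁
  obtain ⟨⟨B, ψ⟩, v, n⟩ := e₂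
  obtain ⟨⟨_, φ'⟩, _, m'⟩ := e₁'
  obtain ⟨⟨_, ψ'⟩, _, n'⟩ := e₂'
  obtain ⟨rfl, rfl⟩ := Prod.mk.inj h₁
  obtain ⟨rfl, rfl⟩ := Prod.mk.inj h₂
  refine Prod.ext (Prod.ext rfl (bkt_comp_snd _ _ _ _ _ _)) ?_
  simp only [courant, compE, act_comp]
  exact (compV_smul_sub _ _ _ _ _).symm

end Omni

open Omni in
theorem courant_bilinear_functor_general {V₀ V₁ : Type*} [AddCommGroup V₀] [Module ℝ V₀] [AddCommGroup V₁] [Module ℝ V₁]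
    (d : V₁ →ₗ[ℝ] V₀) :
    -- skew-symmetry
    (∀ e₁ e₂ : E d, courant d e₁ e₂ = - courant d e₂ e₁) ∧
    -- source: s⟦e₁,e₂⟧ = ⟦s e₁, s e₂⟧ = ([A,B], ½(A₀v − B₀u))
    (∀ e₁ e₂ : E d,
      sE d (courant d e₁ e₂) = courantObj d (sE d e₁) (sE d e₂) ∧
      courantObj d (sE d e₁) (sE d e₂)
        = (bkt0 d e₁.1.1 e₂.1.1,
           (2⁻¹ : ℝ) • (e₁.1.1.1.1 e₂.2.1 - e₂.1.1.1.1 e₁.2.1))) ∧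
    -- target: t⟦e₁,e₂⟧ = ⟦t e₁, t e₂⟧
    (∀ e₁ e₂ : E d,
      tE d (courant d e₁ e₂) = courantObj d (tE d e₁) (tE d e₂)) ∧
    -- identity morphisms go to identity morphisms
    (∀ (A B : End0 d) (u v : V₀),
      courant d ((A, 0), (u, 0)) ((B, 0), (v, 0))
        = (((courantObj d (A, u) (B, v)).1, 0), ((courantObj d (A, u) (B, v)).2, 0))) ∧
    -- vertical composition: functoriality for composable pairs
    (∀ e₁ e₁' e₂ e₂' : E d,
      e₁'.1.1 = e₁.1.1 + δm d e₁.1.2 → e₁'.2.1 = e₁.2.1 + d e₁.2.2 →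
      e₂'.1.1 = e₂.1.1 + δm d e₂.1.2 → e₂'.2.1 = e₂.2.1 + d e₂.2.2 →
      courant d (compE d e₁ e₁') (compE d e₂ e₂')
        = compE d (courant d e₁ e₂) (courant d e₁' e₂')) :=
  ⟨fun e₁ e₂ => courant_swap e₂ e₁, fun _ _ => ⟨rfl, rfl⟩, tE_courant, courant_id,
    fun e₁ e₁' e₂ e₂' h₁ h₁' h₂ h₂' =>
      courant_compE e₁ e₁' e₂ e₂' (Prod.ext h₁ h₁') (Prod.ext h₂ h₂')⟩

open Omni in
/-- The Courant bracket on the omni-Lie 2-algebra `gl(𝕍) ⊕ 𝕍` is a skew-symmetric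
bilinear functor: it preserves source and target, identity morphisms and
vertical composition. -/
theorem courant_bilinear_functor {V₀ V₁ : Type*} [AddCommGroup V₀] [Module ℝ V₀] [AddCommGroup V₁] [Module ℝ V₁]
    [FiniteDimensional ℝ V₀] [FiniteDimensional ℝ V₁]
    (d : V₁ →ₗ[ℝ] V₀) :
    -- skew-symmetry
    (∀ e₁ e₂ : E d, courant d e₁ e₂ = - courant d e₂ e₁) ∧
    -- source: s⟦e₁,e₂⟧ = ⟦s e₁, s e₂⟧ = ([A,B], ½(A₀v − B₀u))
    (∀ e₁ e₂ : E d,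
      sE d (courant d e₁ e₂) = courantObj d (sE d e₁) (sE d e₂) ∧
      courantObj d (sE d e₁) (sE d e₂)
        = (bkt0 d e₁.1.1 e₂.1.1,
           (2⁻¹ : ℝ) • (e₁.1.1.1.1 e₂.2.1 - e₂.1.1.1.1 e₁.2.1))) ∧
    -- target: t⟦e₁,e₂⟧ = ⟦t e₁, t e₂⟧
    (∀ e₁ e₂ : E d,
      tE d (courant d e₁ e₂) = courantObj d (tE d e₁) (tE d e₂)) ∧
    -- identity morphisms go to identity morphisms
    (∀ (A B : End0 d) (u v : V₀),
      courant d ((A, 0), (u, 0)) ((B, 0), (v, 0))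
        = (((courantObj d (A, u) (B, v)).1, 0), ((courantObj d (A, u) (B, v)).2, 0))) ∧
    -- vertical composition: functoriality for composable pairs
    (∀ e₁ e₁' e₂ e₂' : E d,
      e₁'.1.1 = e₁.1.1 + δm d e₁.1.2 → e₁'.2.1 = e₁.2.1 + d e₁.2.2 →
      e₂'.1.1 = e₂.1.1 + δm d e₂.1.2 → e₂'.2.1 = e₂.2.1 + d e₂.2.2 →
      courant d (compE d e₁ e₁') (compE d e₂ e₂')
        = compE d (courant d e₁ e₂) (courant d e₁' e₂')) :=
  courant_bilinear_functor_general d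
end

section
/- Given bilinear functor data (F₀, F_a, F_b) for 𝕍, the graph G_F := {(ad_F(ξ), ξ) : ξ ∈ V₀ ⊕ V₁} is a Dirac structure of the omni-Lie 2-algebra gl(𝕍) ⊕ 𝕍 (i.e. G_F = G_F^⊥ with respect to the 𝕍-valued pairing and ⟦G_F, G_F⟧ ⊆ G_F) if and only if F defines a strict Lie 2-algebra structure on 𝕍, i.e. F is skew-symmetric (F₀(u,v) = −F₀(v,u) and F_a(u,n) = −F_b(n,u)) and the bracket F(ξ,η) := ad_F(ξ)·η on V₀ ⊕ V₁ satisfies the Jacobi identity F(ξ, F(η,θ)) = F(F(ξ,η), θ) + F(η, F(ξ,θ)) for all ξ, η, θ ∈ V₀ ⊕ V₁; given skew-symmetry, the closedness ⟦G_F,G_F⟧ ⊆ G_F is in turn equivalent to [ad_F(ξ), ad_F(η)] = ad_F(F(ξ,η)) for all ξ, η. -/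
/-!
Pairing two elements of the graph gives `½ (F(ξ,η) + F(η,ξ))`, so `G_F ⊆ G_F^⊥` is exactly
skew-symmetry. Under skew-symmetry, an element `(X, ξ)` of `G_F^⊥` satisfies
`X·η = -F(η,ξ) = ad_F(ξ)·η` for all `η`, and an element of `gl(𝕍)` is determined by its action,
so `G_F^⊥ = G_F`. Also under skew-symmetry the Courant bracket of `(ad_F ξ, ξ)` and `(ad_F η, η)`
is `([ad_F ξ, ad_F η], F(ξ,η))`; since the action is a representation of the bracket, the
condition `[ad_F ξ, ad_F η] = ad_F F(ξ,η)` is the Jacobi identity.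
-/

open LinearMap

noncomputable section

namespace Omni

variable {V₀ V₁ : Type*}
  [AddCommGroup V₀] [Module ℝ V₀] [AddCommGroup V₁] [Module ℝ V₁]

variable (d : V₁ →ₗ[ℝ] V₀)

section StrictLie2

variable {d}

def BilinData.IsSkew (F : BilinData d) : Prop :=
  (∀ u v : V₀, F.F0 u v = - F.F0 v u) ∧ (∀ (u : V₀) (n : V₁), F.Fa u n = - F.Fb n u)

def IsCourantClosed (L : Set (E d)) : Prop :=
  ∀ e ∈ L, ∀ e' ∈ L, courant d e e' ∈ L

theorem act_injective : Function.Injective (act d) := by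
  intro X Y h
  have hφ : X.2 = Y.2 :=
    LinearMap.ext fun v => by simpa [act] using congrArg Prod.snd (congrFun h (v, 0))
  have h₀ : X.1.1.1 = Y.1.1.1 :=
    LinearMap.ext fun v => congrArg Prod.fst (congrFun h (v, 0))
  have h₁ : X.1.1.2 = Y.1.1.2 :=
    LinearMap.ext fun n => by simpa [act, hφ] using congrArg Prod.snd (congrFun h (0, n))
  exact Prod.ext (Subtype.ext (Prod.ext h₀ h₁)) hφ

theorem act_bkt (X Y : Gl d) (θ : V₀ × V₁) :
    act d (bkt d X Y) θ = act d X (act d Y θ) - act d Y (act d X θ) := by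
  have hX : X.1.1.1 (d θ.2) = d (X.1.1.2 θ.2) := LinearMap.congr_fun X.1.2 θ.2
  have hY : Y.1.1.1 (d θ.2) = d (Y.1.1.2 θ.2) := LinearMap.congr_fun Y.1.2 θ.2
  refine Prod.ext ?_ ?_
  · simp [act, bkt, bkt0]
  · simp only [act, bkt, bkt0, bktAφ, bktδ, LinearMap.sub_apply, LinearMap.add_apply,
      LinearMap.comp_apply, map_add, Prod.snd_sub]
    rw [← hX, ← hY]
    abel

theorem BilinData.isSkew_iff_act_adF_add_act_adF (F : BilinData d) :
    F.IsSkew ↔ ∀ ξ η : V₀ × V₁, act d (adF d F ξ) η + act d (adF d F η) ξ = 0 := by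
  constructor
  · rintro ⟨hs₀, hs₁⟩ ⟨u, m⟩ ⟨v, n⟩
    refine Prod.ext ?_ ?_
    · simp [act, adF, hs₀ u v]
    · simp only [act, adF, Prod.snd_add, map_add, Prod.snd_zero]
      rw [hs₁ u n, hs₁ v m, ← F.hc m n, hs₁ (d m) n]
      abel
  · intro h
    refine ⟨fun u v => ?_, fun u n => ?_⟩
    · have h' := congrArg Prod.fst (h (u, 0) (v, 0))
      simp only [act, adF, Prod.fst_add, Prod.fst_zero] at h'
      exact eq_neg_of_add_eq_zero_left h'
    · have h' := congrArg Prod.snd (h (u, 0) (0, n))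
      simp only [act, adF, Prod.snd_add, Prod.snd_zero, map_zero, LinearMap.zero_apply,
        zero_add, add_zero] at h'
      exact eq_neg_of_add_eq_zero_left h'

theorem graphF_subset_perp_iff (F : BilinData d) :
    graphF d F ⊆ perp d (graphF d F) ↔ F.IsSkew := by
  rw [F.isSkew_iff_act_adF_add_act_adF]
  constructor
  · intro h ξ η
    have h' : (2⁻¹ : ℝ) • (act d (adF d F ξ) η + act d (adF d F η) ξ) = 0 :=
      h ⟨ξ, rfl⟩ _ ⟨η, rfl⟩
    exact (smul_eq_zero.mp h').resolve_left (by norm_num)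
  · rintro h _ ⟨ξ, rfl⟩ _ ⟨η, rfl⟩
    show (2⁻¹ : ℝ) • (act d (adF d F ξ) η + act d (adF d F η) ξ) = 0
    rw [h, smul_zero]

theorem perp_subset_graphF {F : BilinData d} (hF : F.IsSkew) :
    perp d (graphF d F) ⊆ graphF d F := by
  intro e he
  refine ⟨e.2, Prod.ext (act_injective (funext fun η => ?_)) rfl⟩
  have h : (2⁻¹ : ℝ) • (act d e.1 η + act d (adF d F η) e.2) = 0 := he _ ⟨η, rfl⟩
  have hsum := (smul_eq_zero.mp h).resolve_left (by norm_num)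
  have hskew := (F.isSkew_iff_act_adF_add_act_adF.mp hF) e.2 η
  exact add_right_cancel (hsum.trans hskew.symm)

theorem graphF_eq_perp_iff (F : BilinData d) :
    graphF d F = perp d (graphF d F) ↔ F.IsSkew :=
  ⟨fun h => (graphF_subset_perp_iff F).mp h.le,
    fun hF => ((graphF_subset_perp_iff F).mpr hF).antisymm (perp_subset_graphF hF)⟩

theorem courant_graphF {F : BilinData d} (hF : F.IsSkew) (ξ η : V₀ × V₁) :
    courant d (adF d F ξ, ξ) (adF d F η, η)
      = (bkt d (adF d F ξ) (adF d F η), act d (adF d F ξ) η) := by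
  have hneg : act d (adF d F η) ξ = - act d (adF d F ξ) η :=
    eq_neg_of_add_eq_zero_right ((F.isSkew_iff_act_adF_add_act_adF.mp hF) ξ η)
  refine Prod.ext rfl ?_
  show (2⁻¹ : ℝ) • (act d (adF d F ξ) η - act d (adF d F η) ξ) = _
  rw [hneg, sub_neg_eq_add, ← two_smul ℝ, smul_smul]
  norm_num

theorem isCourantClosed_graphF_iff {F : BilinData d} (hF : F.IsSkew) :
    IsCourantClosed (graphF d F) ↔
      ∀ ξ η : V₀ × V₁, bkt d (adF d F ξ) (adF d F η) = adF d F (act d (adF d F ξ) η) := by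
  constructor
  · intro h ξ η
    obtain ⟨ζ, hζ⟩ := h _ ⟨ξ, rfl⟩ _ ⟨η, rfl⟩
    rw [courant_graphF hF, Prod.mk.injEq] at hζ
    rw [hζ.1, hζ.2]
  · rintro h _ ⟨ξ, rfl⟩ _ ⟨η, rfl⟩
    exact ⟨act d (adF d F ξ) η, by rw [courant_graphF hF, h]⟩

theorem bkt_adF_iff_jacobi (F : BilinData d) :
    (∀ ξ η : V₀ × V₁, bkt d (adF d F ξ) (adF d F η) = adF d F (act d (adF d F ξ) η)) ↔
      ∀ ξ η θ : V₀ × V₁,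
        act d (adF d F ξ) (act d (adF d F η) θ)
          = act d (adF d F (act d (adF d F ξ) η)) θ
            + act d (adF d F η) (act d (adF d F ξ) θ) := by
  refine forall₂_congr fun ξ η => ?_
  rw [← act_injective.eq_iff, funext_iff]
  refine forall_congr' fun θ => ?_
  rw [act_bkt, sub_eq_iff_eq_add]

end StrictLie2

end Omni

end

open Omni in
theorem graph_dirac_iff_strict_lie2_general {V₀ V₁ : Type*} [AddCommGroup V₀] [Module ℝ V₀] [AddCommGroup V₁] [Module ℝ V₁]
    (d : V₁ →ₗ[ℝ] V₀) (F : BilinData d) :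
    ((graphF d F = perp d (graphF d F) ∧
        ∀ e ∈ graphF d F, ∀ e' ∈ graphF d F, courant d e e' ∈ graphF d F)
      ↔ (((∀ u v : V₀, F.F0 u v = - F.F0 v u) ∧
          (∀ (u : V₀) (n : V₁), F.Fa u n = - F.Fb n u)) ∧
         (∀ ξ η θ : V₀ × V₁,
           act d (adF d F ξ) (act d (adF d F η) θ)
             = act d (adF d F (act d (adF d F ξ) η)) θ
               + act d (adF d F η) (act d (adF d F ξ) θ))))
    ∧
    (((∀ u v : V₀, F.F0 u v = - F.F0 v u) ∧
      (∀ (u : V₀) (n : V₁), F.Fa u n = - F.Fb n u)) →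
      ((∀ e ∈ graphF d F, ∀ e' ∈ graphF d F, courant d e e' ∈ graphF d F)
        ↔ ∀ ξ η : V₀ × V₁,
            bkt d (adF d F ξ) (adF d F η) = adF d F (act d (adF d F ξ) η))) := by
  refine ⟨⟨fun ⟨hG, hC⟩ => ?_, fun ⟨hF, hJ⟩ => ?_⟩, isCourantClosed_graphF_iff⟩
  · have hF : F.IsSkew := (graphF_eq_perp_iff F).mp hG
    exact ⟨hF, (bkt_adF_iff_jacobi F).mp ((isCourantClosed_graphF_iff hF).mp hC)⟩
  · exact ⟨(graphF_eq_perp_iff F).mpr hF,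
      (isCourantClosed_graphF_iff hF).mpr ((bkt_adF_iff_jacobi F).mpr hJ)⟩

open Omni in
/-- The graph `G_F` is a Dirac structure of the omni-Lie 2-algebra `gl(𝕍) ⊕ 𝕍` iff `F`
defines a strict Lie 2-algebra structure on `𝕍` (skew-symmetry plus Jacobi identity for
`F(ξ,η) := ad_F(ξ)·η`); moreover, given skew-symmetry, closedness of the graph under the
Courant bracket is equivalent to `[ad_F ξ, ad_F η] = ad_F (F(ξ,η))`. -/
theorem graph_dirac_iff_strict_lie2 {V₀ V₁ : Type*} [AddCommGroup V₀] [Module ℝ V₀] [AddCommGroup V₁] [Module ℝ V₁]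
    [FiniteDimensional ℝ V₀] [FiniteDimensional ℝ V₁]
    (d : V₁ →ₗ[ℝ] V₀) (F : BilinData d) :
    ((graphF d F = perp d (graphF d F) ∧
        ∀ e ∈ graphF d F, ∀ e' ∈ graphF d F, courant d e e' ∈ graphF d F)
      ↔ (((∀ u v : V₀, F.F0 u v = - F.F0 v u) ∧
          (∀ (u : V₀) (n : V₁), F.Fa u n = - F.Fb n u)) ∧
         (∀ ξ η θ : V₀ × V₁,
           act d (adF d F ξ) (act d (adF d F η) θ)
             = act d (adF d F (act d (adF d F ξ) η)) θ
               + act d (adF d F η) (act d (adF d F ξ) θ))))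
    ∧
    (((∀ u v : V₀, F.F0 u v = - F.F0 v u) ∧
      (∀ (u : V₀) (n : V₁), F.Fa u n = - F.Fb n u)) →
      ((∀ e ∈ graphF d F, ∀ e' ∈ graphF d F, courant d e e' ∈ graphF d F)
        ↔ ∀ ξ η : V₀ × V₁,
            bkt d (adF d F ξ) (adF d F η) = adF d F (act d (adF d F ξ) η))) :=
  graph_dirac_iff_strict_lie2_general d F
end
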